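/- The associated Ehresmann category C of an E-Ehresmann semigroup S is a groupoid if and only if S is an inverse semigroup and E = E(S). -/

import Mathlib

/-- An E-Ehresmann semigroup as a (2,1,1)-algebra. -/
class EhresmannSemigroup (S : Type*) extends Semigroup S where
  plus : S → S
  estar : S → S
  plus_mul_self : ∀ x : S, plus x * x = x
  plus_prod_idem : ∀ x y : S, plus (plus x * plus y) = plus x * plus y
  plus_comm : ∀ x y : S, plus x * plus y = plus y * plus x
  plus_absorb : ∀ x y : S, plus x * plus (x * y) = plus (x * y)
  plus_mul_plus : ∀ x y : S, plus (x * y) = plus (x * plus y)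
  mul_estar_self : ∀ x : S, x * estar x = x
  estar_prod_idem : ∀ x y : S, estar (estar x * estar y) = estar x * estar y
  estar_comm : ∀ x y : S, estar x * estar y = estar y * estar x
  estar_absorb : ∀ x y : S, estar (x * y) * estar y = estar (x * y)
  estar_mul_estar : ∀ x y : S, estar (x * y) = estar (estar x * y)
  estar_plus : ∀ x : S, estar (plus x) = plus x
  plus_estar : ∀ x : S, plus (estar x) = estar x

open EhresmannSemigroup

/-- The distinguished semilattice `E` of an `E`-Ehresmann semigroup. -/
def eE (S : Type*) [EhresmannSemigroup S] : Set S := Set.range (plus : S → S)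

/-- The partial order `≤_r` : `a ≤_r b` iff `a = a⁺ b`. -/
def leR {S : Type*} [EhresmannSemigroup S] (a b : S) : Prop := a = plus a * b

/-- The partial order `≤_l` : `a ≤_l b` iff `a = b a*`. -/
def leL {S : Type*} [EhresmannSemigroup S] (a b : S) : Prop := a = b * estar a

/-- Green's `R` relation on a semigroup. -/
def rRel {S : Type*} [Semigroup S] (a b : S) : Prop :=
  (a = b ∨ ∃ x, a * x = b) ∧ (b = a ∨ ∃ x, b * x = a)

/-- Green's `L` relation on a semigroup. -/
def lRel {S : Type*} [Semigroup S] (a b : S) : Prop :=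
  (a = b ∨ ∃ x, x * a = b) ∧ (b = a ∨ ∃ x, x * b = a)

/-- Green's `D` relation on a semigroup. -/
def dRel {S : Type*} [Semigroup S] (a b : S) : Prop := ∃ c, rRel a c ∧ lRel c b

/-- The set `Reg_E(S)` of elements corresponding to invertible morphisms. -/
def regE (S : Type*) [EhresmannSemigroup S] : Set S :=
  {a | rRel a (plus a) ∧ lRel a (estar a)}

/-- `C(a)` is an invertible morphism of the associated Ehresmann category. -/
def invertibleC {S : Type*} [EhresmannSemigroup S] (a : S) : Prop :=
  ∃ b, plus b = estar a ∧ estar b = plus a ∧ a * b = plus a ∧ b * a = estar a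

open EhresmannSemigroup

/-!
If `au = a⁺` and `va = a*`, then `b = a* u` is an inverse of `a` with `ab = a⁺` and `ba = a*`.
For an idempotent `e` such witnesses give `e e⁺ = e⁺` and `e* e = e*`, and since `e⁺`, `e*`
commute this forces `e⁺ = e* = e`; so every idempotent lies in `E`, idempotents commute and
inverses are unique. Conversely, if `b` is an inverse of `a`, the idempotents `ab`, `ba` lie in
`E`, and `plus (e a) = e a⁺` for `e ∈ E` yields `a (b a⁺) = a⁺` and `(a* b) a = a*`.
-/

theorem eq_of_isInverse_of_idempotents_commute {S : Type*} [Semigroup S]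
    (hcomm : ∀ e f : S, IsIdempotentElem e → IsIdempotentElem f → Commute e f) {a b c : S}
    (hb : a * b * a = a ∧ b * a * b = b) (hc : a * c * a = a ∧ c * a * c = c) : b = c := by
  obtain ⟨hab, hba⟩ := hb
  obtain ⟨hac, hca⟩ := hc
  have idem_left {x : S} (h : x * a * x = x) : IsIdempotentElem (x * a) := by
    rw [IsIdempotentElem, ← mul_assoc, h]
  have idem_right {x : S} (h : a * x * a = a) : IsIdempotentElem (a * x) := by
    rw [IsIdempotentElem, ← mul_assoc, h]
  have hb' : b = c * a * b :=
    calc b = b * a * (c * a) * b := by rw [mul_assoc b a (c * a), ← mul_assoc a c a, hac, hba]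
      _ = c * a * (b * a) * b := by rw [(hcomm _ _ (idem_left hba) (idem_left hca)).eq]
      _ = c * a * b := by rw [mul_assoc (c * a), hba]
  have hc' : c = c * a * b :=
    calc c = c * (a * b) * (a * c) := by
          rw [mul_assoc c (a * b), ← mul_assoc (a * b) a c, hab, ← mul_assoc, hca]
      _ = c * (a * c) * (a * b) := by
          rw [mul_assoc c, (hcomm _ _ (idem_right hab) (idem_right hac)).eq, ← mul_assoc]
      _ = c * a * b := by rw [← mul_assoc c a c, hca, mul_assoc]
  exact hb'.trans hc'.symm

namespace EhresmannSemigroup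

variable {S : Type*} [EhresmannSemigroup S]

theorem plus_plus (a : S) : plus (plus a) = plus a := by
  simpa only [estar_plus] using plus_estar (plus a)

theorem plus_mem_eE (a : S) : plus a ∈ eE S := ⟨a, rfl⟩

theorem estar_mem_eE (a : S) : estar a ∈ eE S := ⟨estar a, plus_estar a⟩

theorem plus_of_mem_eE {e : S} (he : e ∈ eE S) : plus e = e := by
  obtain ⟨x, rfl⟩ := he
  exact plus_plus x

theorem estar_of_mem_eE {e : S} (he : e ∈ eE S) : estar e = e := by
  obtain ⟨x, rfl⟩ := he
  exact estar_plus x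

theorem isIdempotentElem_of_mem_eE {e : S} (he : e ∈ eE S) : IsIdempotentElem e := by
  simpa only [IsIdempotentElem, plus_of_mem_eE he] using plus_mul_self e

theorem mul_mem_eE {e f : S} (he : e ∈ eE S) (hf : f ∈ eE S) : e * f ∈ eE S := by
  obtain ⟨x, rfl⟩ := he
  obtain ⟨y, rfl⟩ := hf
  exact ⟨plus x * plus y, plus_prod_idem x y⟩

theorem commute_of_mem_eE {e f : S} (he : e ∈ eE S) (hf : f ∈ eE S) : Commute e f := by
  obtain ⟨x, rfl⟩ := he
  obtain ⟨y, rfl⟩ := hf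
  exact plus_comm x y

theorem rRel_plus_iff {a : S} : rRel a (plus a) ↔ ∃ u, a * u = plus a := by
  refine ⟨fun ⟨h, _⟩ => h.elim (fun h => ⟨a, ?_⟩) id,
    fun h => ⟨.inr h, .inr ⟨a, plus_mul_self a⟩⟩⟩
  nth_rw 1 [h]
  rw [plus_mul_self, ← h]

theorem lRel_estar_iff {a : S} : lRel a (estar a) ↔ ∃ v, v * a = estar a := by
  refine ⟨fun ⟨h, _⟩ => h.elim (fun h => ⟨a, ?_⟩) id,
    fun h => ⟨.inr h, .inr ⟨a, mul_estar_self a⟩⟩⟩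
  nth_rw 2 [h]
  rw [mul_estar_self, ← h]

theorem mem_eE_of_mul_plus_of_estar_mul {e : S} (hr : e * plus e = plus e)
    (hl : estar e * e = estar e) : e ∈ eE S := by
  have hcomm : plus e * estar e = estar e * plus e :=
    (commute_of_mem_eE (plus_mem_eE e) (estar_mem_eE e)).eq
  have hstar : estar e = plus e * estar e := by
    calc estar e = estar e * (plus e * e) := by rw [plus_mul_self, hl]
      _ = plus e * estar e := by rw [← mul_assoc, ← hcomm, mul_assoc, hl]
  have hplus : plus e = plus e * estar e := by
    calc plus e = e * estar e * plus e := by rw [mul_estar_self, hr]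
      _ = plus e * estar e := by rw [mul_assoc, ← hcomm, ← mul_assoc, hr]
  refine ⟨e, ?_⟩
  calc plus e = e * plus e := hr.symm
    _ = e * estar e := by rw [hplus, ← hstar]
    _ = e := mul_estar_self e

theorem mem_eE_of_isIdempotentElem {e : S} (hu : ∃ u, e * u = plus e)
    (hv : ∃ v, v * e = estar e) (he : IsIdempotentElem e) : e ∈ eE S := by
  obtain ⟨u, hu⟩ := hu
  obtain ⟨v, hv⟩ := hv
  refine mem_eE_of_mul_plus_of_estar_mul ?_ ?_
  · rw [← hu, ← mul_assoc, he.eq]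
  · rw [← hv, mul_assoc, he.eq]

theorem exists_isInverse_of_mul_eq_plus_of_mul_eq_estar {a u v : S} (hu : a * u = plus a)
    (hv : v * a = estar a) : ∃ b, a * b * a = a ∧ b * a * b = b := by
  have hab : a * (estar a * u) = plus a := by rw [← mul_assoc, mul_estar_self, hu]
  have hba : estar a * u * a = estar a := by
    rw [← hv, mul_assoc v, hu, mul_assoc, plus_mul_self]
  refine ⟨estar a * u, by rw [hab, plus_mul_self], ?_⟩
  rw [hba, ← mul_assoc, (isIdempotentElem_of_mem_eE (estar_mem_eE a)).eq]

theorem mul_plus_of_mul_eq {e a : S} (he : e ∈ eE S) (h : e * a = a) :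
    e * plus a = plus a := by
  rw [← plus_of_mem_eE (mul_mem_eE he (plus_mem_eE a)), ← plus_mul_plus, h]

theorem estar_mul_of_mul_eq {e a : S} (he : e ∈ eE S) (h : a * e = a) :
    estar a * e = estar a := by
  rw [← estar_of_mem_eE (mul_mem_eE (estar_mem_eE a) he), ← estar_mul_estar, h]

end EhresmannSemigroup

/-- The associated Ehresmann category `C` of an E-Ehresmann
semigroup `S` is a groupoid (every morphism `C(a)` is invertible, equivalently
`a R a⁺` and `a L a*` for all `a`) iff `S` is an inverse semigroup (every
element has a unique inverse) and `E = E(S)`. -/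
theorem groupoid_iff_inverse_semigroup (S : Type*) [EhresmannSemigroup S] :
    (∀ a : S, rRel a (plus a) ∧ lRel a (estar a)) ↔
      ((∀ a : S, ∃! b : S, a * b * a = a ∧ b * a * b = b) ∧
        eE S = {e : S | e * e = e}) := by
  simp only [rRel_plus_iff, lRel_estar_iff]
  constructor
  · intro H
    have hE : eE S = {e : S | e * e = e} := Set.Subset.antisymm
      (fun e he => isIdempotentElem_of_mem_eE he)
      (fun e he => mem_eE_of_isIdempotentElem (H e).1 (H e).2 he)
    refine ⟨fun a => ?_, hE⟩
    obtain ⟨⟨u, hu⟩, ⟨v, hv⟩⟩ := H a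
    obtain ⟨b, hb⟩ := exists_isInverse_of_mul_eq_plus_of_mul_eq_estar hu hv
    have hcomm (e f : S) (he : IsIdempotentElem e) (hf : IsIdempotentElem f) : Commute e f :=
      commute_of_mem_eE (hE ▸ he) (hE ▸ hf)
    exact ⟨b, hb, fun c hc => eq_of_isInverse_of_idempotents_commute hcomm hc hb⟩
  · rintro ⟨hinv, hE⟩ a
    obtain ⟨b, ⟨hab, hba⟩, -⟩ := hinv a
    have hidem {x : S} (h : x * x = x) : x ∈ eE S := hE ▸ h
    have hab_mem : a * b ∈ eE S := hidem (by rw [← mul_assoc, hab])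
    have hba_mem : b * a ∈ eE S := hidem (by rw [← mul_assoc, hba])
    refine ⟨⟨b * plus a, ?_⟩, ⟨estar a * b, ?_⟩⟩
    · rw [← mul_assoc, mul_plus_of_mul_eq hab_mem hab]
    · rw [mul_assoc, estar_mul_of_mul_eq hba_mem (by rw [← mul_assoc, hab])]
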